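/- arXiv:2003.12540 — 2 statements merged into one kernel-verified Lean document; each statement's English description precedes it below -/
import Mathlib

section
/- Let the set of black positions be a uniformly random m-subset of {1,...,n}, listed in increasing order as j_1 < j_2 < ... < j_m. Let N be the number of indices i ∈ {1,...,m-1} with j_{i+1} - j_i ≤ d. Then E[N] ≤ m·(1 - ∏_{k=1}^{d} (n-m+1-k)/(n-k)). -/
/-!
If the gap after the black ball `j` is at most `d`, then the window `(j, j + d]` contains
another black ball. Count the pairs `(S, j)` with `j ∈ S` and a black ball in the window of `j`
position by position: `j` lies in `C(n-1, m-1)` of the `m`-subsets, and in at least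
`C(n-1-d, m-1)` of them its window is empty. Hence `E[N] ≤ n (C(n-1, m-1) - C(n-1-d, m-1)) / C(n, m)
= m (1 - C(n-1-d, m-1) / C(n-1, m-1))`, and the last ratio is the product in the statement.
-/

open Finset

section Counting

variable {α : Type*} [DecidableEq α]

lemma card_filter_mem_powersetCard {A : Finset α} {j : α} (hj : j ∈ A) {m : ℕ} (hm : 1 ≤ m) :
    #{S ∈ A.powersetCard m | j ∈ S} = (#A - 1).choose (m - 1) := by
  simpa using card_filter_powersetCard_subset {j} A m (singleton_subset_iff.2 hj) hm

lemma card_filter_mem_not_disjoint_powersetCard {A U : Finset α} {j : α} (hj : j ∈ A \ U)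
    {m : ℕ} (hm : 1 ≤ m) :
    #{S ∈ A.powersetCard m | j ∈ S ∧ ¬Disjoint S U}
      = (#A - 1).choose (m - 1) - (#(A \ U) - 1).choose (m - 1) := by
  have hdisj : {S ∈ A.powersetCard m | j ∈ S ∧ Disjoint S U}
      = {S ∈ (A \ U).powersetCard m | j ∈ S} := by
    ext S
    simp only [mem_filter, mem_powersetCard, subset_sdiff]
    tauto
  rw [← card_filter_mem_powersetCard (mem_sdiff.1 hj).1 hm,
    ← card_filter_mem_powersetCard hj hm, ← hdisj,
    ← card_filter_add_card_filter_not (s := {S ∈ A.powersetCard m | j ∈ S}) (Disjoint · U),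
    filter_filter, filter_filter, Nat.add_sub_cancel_left]

end Counting

lemma card_filter_sorted_gap_le (S : Finset ℕ) (d : ℕ) :
    #{i ∈ range (#S - 1) | (S.sort (· ≤ ·)).getD (i + 1) 0 - (S.sort (· ≤ ·)).getD i 0 ≤ d}
      ≤ #{j ∈ S | ¬Disjoint S (Ioc j (j + d))} := by
  set L := S.sort (· ≤ ·)
  have hlen : L.length = #S := length_sort _
  have hmono : StrictMono L.get := (sortedLT_sort S).strictMono_get
  have hgetD : ∀ i (hi : i < #S), L.getD i 0 = L.get ⟨i, hlen ▸ hi⟩ := fun i hi =>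
    List.getD_eq_getElem _ _ _
  have hmem : ∀ i (hi : i < #S), L.getD i 0 ∈ S := fun i hi => by
    rw [hgetD i hi, ← mem_sort (· ≤ ·)]; exact List.get_mem _ _
  refine card_le_card_of_injOn (fun i => L.getD i 0) (fun i hi => ?_) (fun a ha b hb hab => ?_)
  · simp only [coe_filter, mem_range, Set.mem_ofPred_eq] at hi
    have hlt : L.getD i 0 < L.getD (i + 1) 0 := by
      rw [hgetD i (by omega), hgetD (i + 1) (by omega)]
      exact hmono (Fin.mk_lt_mk.2 (Nat.lt_succ_self i))
    simp only [coe_filter, Set.mem_ofPred_eq, not_disjoint_iff, mem_Ioc]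
    exact ⟨hmem i (by omega), _, hmem (i + 1) (by omega), hlt, by omega⟩
  · simp only [coe_filter, mem_range, Set.mem_ofPred_eq] at ha hb
    simp only [hgetD a (by omega), hgetD b (by omega)] at hab
    exact Fin.mk.inj_iff.1 (hmono.injective hab)

lemma sum_card_filter_not_disjoint_Ioc_le (A : Finset ℕ) {m : ℕ} (hm : 1 ≤ m) (d : ℕ) :
    ∑ S ∈ A.powersetCard m, #{j ∈ S | ¬Disjoint S (Ioc j (j + d))}
      ≤ #A * ((#A - 1).choose (m - 1) - (#A - 1 - d).choose (m - 1)) := by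
  calc ∑ S ∈ A.powersetCard m, #{j ∈ S | ¬Disjoint S (Ioc j (j + d))}
      = ∑ S ∈ A.powersetCard m, #{j ∈ A | j ∈ S ∧ ¬Disjoint S (Ioc j (j + d))} := by
        refine sum_congr rfl fun S hS => congrArg card ?_
        rw [← filter_filter, filter_mem_eq_inter, inter_eq_right.2 (mem_powersetCard.1 hS).1]
    _ = ∑ j ∈ A, #{S ∈ A.powersetCard m | j ∈ S ∧ ¬Disjoint S (Ioc j (j + d))} :=
        sum_card_bipartiteAbove_eq_sum_card_bipartiteBelow _
    _ ≤ ∑ j ∈ A, ((#A - 1).choose (m - 1) - (#A - 1 - d).choose (m - 1)) := by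
        refine sum_le_sum fun j hj => ?_
        rw [card_filter_mem_not_disjoint_powersetCard (by simpa using hj) hm]
        have : #A - 1 - d ≤ #(A \ Ioc j (j + d)) - 1 := by
          have := le_card_sdiff (Ioc j (j + d)) A
          simp only [Nat.card_Ioc] at this
          omega
        have := Nat.choose_le_choose (m - 1) this
        omega
    _ = _ := by rw [sum_const, smul_eq_mul]

lemma prod_Icc_div_eq_choose_div {n m : ℕ} (hm : 1 ≤ m) :
    ∀ {d : ℕ}, d + m ≤ n →
      ∏ k ∈ Icc 1 d, ((n - m + 1 - k : ℕ) : ℝ) / ((n - k : ℕ) : ℝ)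
        = ((n - 1 - d).choose (m - 1) : ℝ) / ((n - 1).choose (m - 1) : ℝ)
  | 0, h => by
    have : (n - 1).choose (m - 1) ≠ 0 := (Nat.choose_pos (by omega)).ne'
    simp [this]
  | d + 1, h => by
    obtain ⟨a, ha⟩ : ∃ a, n - 1 - d = a + 1 := ⟨n - 2 - d, by omega⟩
    have hstep := Nat.choose_mul_succ_eq a (m - 1)
    rw [prod_Icc_succ_top (by omega), prod_Icc_div_eq_choose_div hm (by omega),
      show n - m + 1 - (d + 1) = a + 1 - (m - 1) by omega, show n - (d + 1) = a + 1 by omega,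
      show n - 1 - (d + 1) = a by omega, ha]
    have hB : ((n - 1).choose (m - 1) : ℝ) ≠ 0 := by
      exact_mod_cast (Nat.choose_pos (by omega)).ne'
    rw [div_mul_div_comm, div_eq_div_iff (by positivity) hB]
    norm_cast
    rw [← hstep]
    ring

theorem stmt_6_general (n m d : ℕ) (hm : 1 ≤ m) (hmn : m ≤ n) (hnm : d ≤ n - m) :
    (∑ S ∈ (Finset.Icc 1 n).powersetCard m,
        (((Finset.range (m - 1)).filter
          (fun i => (S.sort (· ≤ ·)).getD (i + 1) 0 - (S.sort (· ≤ ·)).getD i 0 ≤ d)).card : ℝ))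
        / (n.choose m : ℝ)
      ≤ m * (1 - ∏ k ∈ Finset.Icc 1 d, ((n - m + 1 - k : ℕ) : ℝ) / ((n - k : ℕ) : ℝ)) := by
  rw [prod_Icc_div_eq_choose_div hm (by omega)]
  set B := (n - 1).choose (m - 1)
  set B' := (n - 1 - d).choose (m - 1)
  have hgaps : ∑ S ∈ (Icc 1 n).powersetCard m,
      #{i ∈ range (m - 1) | (S.sort (· ≤ ·)).getD (i + 1) 0 - (S.sort (· ≤ ·)).getD i 0 ≤ d}
        ≤ n * (B - B') :=
    calc _ ≤ ∑ S ∈ (Icc 1 n).powersetCard m, #{j ∈ S | ¬Disjoint S (Ioc j (j + d))} :=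
          sum_le_sum fun S hS => (mem_powersetCard.1 hS).2 ▸ card_filter_sorted_gap_le S d
      _ ≤ n * (B - B') := by simpa using sum_card_filter_not_disjoint_Ioc_le (Icc 1 n) hm d
  have hchoose : (n * B : ℕ) = n.choose m * m := by
    simpa [Nat.sub_add_cancel (by omega : 1 ≤ n), Nat.sub_add_cancel hm]
      using Nat.add_one_mul_choose_eq (n - 1) (m - 1)
  have hle : B' ≤ B := Nat.choose_le_choose _ (by omega)
  have hB : 0 < B := Nat.choose_pos (by omega)
  have hC : 0 < n.choose m := Nat.choose_pos hmn
  calc _ ≤ ((n * (B - B') : ℕ) : ℝ) / n.choose m := by gcongr; exact_mod_cast hgaps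
    _ = m * (1 - B' / B) := by
        have hchoose' : (n * B : ℝ) = n.choose m * m := by exact_mod_cast hchoose
        rw [Nat.cast_mul, Nat.cast_sub hle]
        field_simp
        linear_combination ((B : ℝ) - B') * hchoose'

/-- Black positions form a uniformly random m-subset of {1,…,n}, listed in
increasing order j_1 < … < j_m. N counts indices i with j_{i+1} - j_i ≤ d. Then
E[N] ≤ m·(1 - ∏_{k=1}^d (n-m+1-k)/(n-k)). Formulated as an average over all m-subsets. -/
theorem stmt_6 (n m d : ℕ) (hd : 1 ≤ d) (hm : 1 ≤ m) (hmn : m ≤ n) (hnm : d ≤ n - m) :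
    (∑ S ∈ (Finset.Icc 1 n).powersetCard m,
        (((Finset.range (m - 1)).filter
          (fun i => (S.sort (· ≤ ·)).getD (i + 1) 0 - (S.sort (· ≤ ·)).getD i 0 ≤ d)).card : ℝ))
        / (n.choose m : ℝ)
      ≤ m * (1 - ∏ k ∈ Finset.Icc 1 d, ((n - m + 1 - k : ℕ) : ℝ) / ((n - k : ℕ) : ℝ)) :=
  stmt_6_general n m d hm hmn hnm
end

section
/- Let the black positions be a uniformly random m-subset of {1,...,n}, and let A_{n,m,s,t} be the event that there exists a window of s consecutive positions containing at least t black balls. Then P(A_{n,m,s,t}) ≤ m·P(Y ≥ t-1), where Y is hypergeometric with population size n-1, m-1 success states, and s-1 draws. -/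
/-!
If some window of `s` consecutive positions holds at least `t ≥ 1` black balls, then its
leftmost black ball `j` is followed by at least `t - 1` black balls among the next `s - 1`
positions. Given that `j` is black, the other `m - 1` black balls form a uniform subset of the
remaining `n - 1` positions, so the number of them in a fixed `(s - 1)`-set is hypergeometric;
the symmetry `C(N,K) C(K,y) C(N-K,M-y) = C(N,M) C(M,y) C(N-M,K-y)` of the hypergeometric law
turns it into the law of `Y`. A union bound over the `n` positions, together with
`n C(n-1,m-1) = m C(n,m)`, gives the claim.
-/

open Finset

theorem Nat.choose_mul_choose_sub_comm (A a b : ℕ) :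
    A.choose a * (A - a).choose b = A.choose b * (A - b).choose a := by
  rw [← add_tsub_cancel_left a b, ← Nat.choose_mul (le_add_right a b), add_tsub_cancel_left,
    ← add_tsub_cancel_right a b, ← Nat.choose_mul (le_add_left b a), add_tsub_cancel_right,
    Nat.choose_symm_add]

theorem Nat.choose_mul_choose_mul_choose_sub_comm {N M K y : ℕ} (hyM : y ≤ M)
    (hyK : y ≤ K) :
    N.choose K * (K.choose y * (N - K).choose (M - y))
      = N.choose M * (M.choose y * (N - M).choose (K - y)) := by
  have hsym := Nat.choose_mul_choose_sub_comm (N - y) (K - y) (M - y)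
  rw [show N - y - (K - y) = N - K by omega, show N - y - (M - y) = N - M by omega] at hsym
  rw [← mul_assoc, ← mul_assoc, Nat.choose_mul hyK, Nat.choose_mul hyM, mul_assoc, mul_assoc,
    hsym]

namespace Finset

theorem exists_mem_le_card_inter_Ioc {β : Type*} [LinearOrder β] [LocallyFiniteOrder β]
    (S : Finset β) {a b : β} {t : ℕ} (h : t < #(S ∩ Icc a b)) :
    ∃ j ∈ S, a ≤ j ∧ t ≤ #(S ∩ Ioc j b) := by
  have hne : (S ∩ Icc a b).Nonempty := card_pos.1 (by omega)
  set j := (S ∩ Icc a b).min' hne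
  have hj := (S ∩ Icc a b).min'_mem hne
  simp only [mem_inter, mem_Icc] at hj
  refine ⟨j, hj.1, hj.2.1, ?_⟩
  have hsub : (S ∩ Icc a b).erase j ⊆ S ∩ Ioc j b := fun x hx => by
    have hjx : j ≤ x := min'_le _ x (mem_of_mem_erase hx)
    simp only [mem_erase, mem_inter, mem_Icc, mem_Ioc] at hx ⊢
    exact ⟨hx.2.1, lt_of_le_of_ne hjx (Ne.symm hx.1), hx.2.2.2⟩
  have := card_le_card hsub
  rw [card_erase_of_mem (min'_mem _ hne)] at this
  omega

theorem exists_mem_le_card_erase_inter_Ioc_add_sub_one (S : Finset ℕ) {i s t : ℕ}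
    (h : t < #(S ∩ Icc i (i + s - 1))) :
    ∃ j ∈ S, t ≤ #(S.erase j ∩ Ioc j (j + s - 1)) := by
  obtain ⟨j, hjS, hij, hj⟩ := exists_mem_le_card_inter_Ioc S h
  refine ⟨j, hjS, hj.trans (card_le_card fun x hx => ?_)⟩
  simp only [mem_inter, mem_Ioc, mem_erase] at hx ⊢
  exact ⟨⟨hx.2.1.ne', hx.1⟩, hx.2.1, by omega⟩

variable {α : Type*} [DecidableEq α]

theorem card_powersetCard_filter_card_inter_eq {D E : Finset α} (hDE : D ⊆ E) {M y : ℕ}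
    (hy : y ≤ M) :
    #{T ∈ E.powersetCard M | #(T ∩ D) = y} = (#D).choose y * (#E - #D).choose (M - y) := by
  rw [← card_sdiff_of_subset hDE, ← card_powersetCard, ← card_powersetCard, ← card_product]
  have hsplit {P Q : Finset α} (hP : P ⊆ D) (hQ : Q ⊆ E \ D) :
      (P ∪ Q) ∩ D = P ∧ (P ∪ Q) \ D = Q := by
    have hQD : Disjoint Q D := disjoint_of_subset_left hQ disjoint_sdiff_self_left
    rw [union_inter_distrib_right, inter_eq_left.2 hP, disjoint_iff_inter_eq_empty.1 hQD,
      union_sdiff_distrib, sdiff_eq_empty_iff_subset.2 hP, hQD.sdiff_eq_left]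
    simp
  refine card_nbij' (fun T => (T ∩ D, T \ D)) (fun p => p.1 ∪ p.2) ?_ ?_ ?_ ?_
  · intro T hT
    simp only [coe_filter, mem_powersetCard, coe_product, Set.mem_prod, mem_coe] at hT ⊢
    obtain ⟨⟨hTE, hTM⟩, hTy⟩ := hT
    refine ⟨⟨inter_subset_right, hTy⟩, sdiff_subset_sdiff hTE subset_rfl, ?_⟩
    have := card_inter_add_card_sdiff T D
    omega
  · rintro ⟨P, Q⟩ hPQ
    simp only [coe_filter, mem_powersetCard, coe_product, Set.mem_prod, mem_coe] at hPQ ⊢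
    obtain ⟨⟨hPD, hP⟩, hQ, hQc⟩ := hPQ
    have hPQ : Disjoint P Q :=
      disjoint_of_subset_left hPD (disjoint_of_subset_left hQ disjoint_sdiff_self_left).symm
    refine ⟨⟨union_subset (hPD.trans hDE) (hQ.trans sdiff_subset), ?_⟩,
      by rw [(hsplit hPD hQ).1, hP]⟩
    rw [card_union_of_disjoint hPQ]
    omega
  · intro T _
    exact sup_inf_sdiff T D
  · rintro ⟨P, Q⟩ hPQ
    simp only [coe_product, Set.mem_prod, mem_coe, mem_powersetCard] at hPQ
    exact Prod.ext (hsplit hPQ.1.1 hPQ.2.1).1 (hsplit hPQ.1.1 hPQ.2.1).2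

theorem card_powersetCard_filter_card_inter_eq_mul_choose_card {D E : Finset α} (hDE : D ⊆ E)
    {M y : ℕ} (hyD : y ≤ #D) :
    #{T ∈ E.powersetCard M | #(T ∩ D) = y} * (#E).choose #D
      = (#E).choose M * (M.choose y * (#E - M).choose (#D - y)) := by
  rcases lt_or_ge M y with hMy | hyM
  · have hempty : {T ∈ E.powersetCard M | #(T ∩ D) = y} = ∅ := by
      refine filter_false_of_mem fun T hT hTy => ?_
      have := card_le_card (inter_subset_left : T ∩ D ⊆ T)
      rw [(mem_powersetCard.1 hT).2] at this
      omega
    simp [hempty, Nat.choose_eq_zero_of_lt hMy]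
  rw [card_powersetCard_filter_card_inter_eq hDE hyM, mul_comm]
  exact Nat.choose_mul_choose_mul_choose_sub_comm hyM hyD

theorem card_powersetCard_filter_le_card_inter_mul_choose_card {D E : Finset α} (hDE : D ⊆ E)
    (M k : ℕ) :
    #{T ∈ E.powersetCard M | k ≤ #(T ∩ D)} * (#E).choose #D
      = (#E).choose M * ∑ y ∈ Icc k #D, M.choose y * (#E - M).choose (#D - y) := by
  rw [card_eq_sum_card_fiberwise (f := fun T => #(T ∩ D)) (t := Icc k #D), sum_mul, mul_sum]
  · refine sum_congr rfl fun y hy => ?_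
    rw [mem_Icc] at hy
    rw [filter_filter, ← card_powersetCard_filter_card_inter_eq_mul_choose_card hDE hy.2]
    congr 3
    ext T
    constructor
    · exact fun h => h.2
    · exact fun h => ⟨h ▸ hy.1, h⟩
  · intro T hT
    simp only [coe_filter, mem_coe, mem_Icc] at hT ⊢
    exact ⟨hT.2, card_le_card inter_subset_right⟩

theorem card_powersetCard_filter_le_card_inter_mul_choose_le {W E : Finset α} {K : ℕ}
    (hW : #W ≤ K) (hK : K ≤ #E) (M k : ℕ) :
    #{T ∈ E.powersetCard M | k ≤ #(T ∩ W)} * (#E).choose K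
      ≤ (#E).choose M * ∑ y ∈ Icc k K, M.choose y * (#E - M).choose (K - y) := by
  obtain ⟨D, hWD, hDE, rfl⟩ := exists_subsuperset_card_eq (inter_subset_left : E ∩ W ⊆ E)
    ((card_le_card inter_subset_right).trans hW) hK
  rw [← card_powersetCard_filter_le_card_inter_mul_choose_card hDE]
  refine Nat.mul_le_mul_right _ (card_le_card fun T => ?_)
  simp only [mem_filter, mem_powersetCard, and_imp]
  refine fun hTE hTM hk => ⟨⟨hTE, hTM⟩, hk.trans (card_le_card fun x hx => ?_)⟩
  rw [mem_inter] at hx ⊢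
  exact ⟨hx.1, hWD (mem_inter.2 ⟨hTE hx.1, hx.2⟩)⟩

theorem card_powersetCard_filter_mem_le (U : Finset α) (j : α) (M : ℕ) (P : Finset α → Prop)
    [DecidablePred P] :
    #{S ∈ U.powersetCard (M + 1) | j ∈ S ∧ P (S.erase j)}
      ≤ #{T ∈ (U.erase j).powersetCard M | P T} := by
  refine card_le_card_of_injOn (·.erase j) (fun S hS => ?_) (fun S hS S' hS' h => ?_)
  · simp only [coe_filter, mem_powersetCard] at hS ⊢
    obtain ⟨⟨hSU, hSM⟩, hjS, hP⟩ := hS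
    exact ⟨⟨erase_subset_erase j hSU, by rw [card_erase_of_mem hjS, hSM]; rfl⟩, hP⟩
  · simp only [coe_filter, mem_powersetCard] at hS hS'
    rw [← insert_erase hS.2.1, ← insert_erase hS'.2.1]
    exact congrArg (insert j) h

theorem card_powersetCard_filter_mem_erase_mul_choose_le {U W : Finset α} {j : α} (hj : j ∈ U)
    {K : ℕ} (hW : #W ≤ K) (hK : K ≤ #U - 1) (M k : ℕ) :
    #{S ∈ U.powersetCard (M + 1) | j ∈ S ∧ k ≤ #(S.erase j ∩ W)} * (#U - 1).choose K
      ≤ (#U - 1).choose M * ∑ y ∈ Icc k K, M.choose y * (#U - 1 - M).choose (K - y) := by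
  have hE : #(U.erase j) = #U - 1 := card_erase_of_mem hj
  calc _ ≤ #{T ∈ (U.erase j).powersetCard M | k ≤ #(T ∩ W)} * (#U - 1).choose K :=
        Nat.mul_le_mul_right _ (card_powersetCard_filter_mem_le U j M _)
    _ ≤ _ := by
        have := card_powersetCard_filter_le_card_inter_mul_choose_le hW (hE ▸ hK) M k
        rwa [hE] at this

end Finset

/-- Lemma 2: Black positions form a uniformly random m-subset of {1,…,n};
A_{n,m,s,t} is the event that some window of s consecutive positions contains at least t
black balls. Then P(A_{n,m,s,t}) ≤ m·P(Y ≥ t-1), where Y is hypergeometric with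
population size n-1, m-1 success states and s-1 draws. -/
theorem stmt_8 (n m s t : ℕ)
    [∀ S : Finset ℕ, Decidable (∃ i ∈ Finset.Icc 1 (n - s + 1),
      t ≤ (S ∩ Finset.Icc i (i + s - 1)).card)] (hm : 1 ≤ m) (hmn : m ≤ n) (hs : 1 ≤ s) (hsn : s ≤ n)
    (ht : 1 ≤ t) (hts : t ≤ s) :
    ((((Finset.Icc 1 n).powersetCard m).filter
        (fun S => ∃ i ∈ Finset.Icc 1 (n - s + 1),
          t ≤ (S ∩ Finset.Icc i (i + s - 1)).card)).card : ℝ) / (n.choose m : ℝ)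
      ≤ m * ∑ y ∈ Finset.Icc (t - 1) (s - 1),
          ((m - 1).choose y * (n - m).choose (s - 1 - y) : ℝ) / ((n - 1).choose (s - 1) : ℝ) := by
  obtain ⟨M, rfl⟩ : ∃ M, m = M + 1 := ⟨m - 1, by omega⟩
  rw [Nat.add_sub_cancel, show n - (M + 1) = n - 1 - M by omega]
  set bad := {S ∈ (Icc 1 n).powersetCard (M + 1) |
    ∃ i ∈ Icc 1 (n - s + 1), t ≤ #(S ∩ Icc i (i + s - 1))}
  set badAt := fun j => {S ∈ (Icc 1 n).powersetCard (M + 1) |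
    j ∈ S ∧ t - 1 ≤ #(S.erase j ∩ Ioc j (j + s - 1))}
  set A := ∑ y ∈ Icc (t - 1) (s - 1), M.choose y * (n - 1 - M).choose (s - 1 - y)
  have h_union : bad ⊆ (Icc 1 n).biUnion badAt := fun S hS => by
    obtain ⟨hS, i, -, hti⟩ := mem_filter.1 hS
    obtain ⟨j, hjS, hj⟩ :=
      exists_mem_le_card_erase_inter_Ioc_add_sub_one S (i := i) (s := s) (t := t - 1) (by omega)
    exact mem_biUnion.2 ⟨j, (mem_powersetCard.1 hS).1 hjS, mem_filter.2 ⟨hS, hjS, hj⟩⟩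
  have h_at (j) (hj : j ∈ Icc 1 n) :
      #(badAt j) * (n - 1).choose (s - 1) ≤ (n - 1).choose M * A := by
    simpa only [Nat.card_Icc, Nat.add_sub_cancel] using
      card_powersetCard_filter_mem_erase_mul_choose_le hj (by rw [Nat.card_Ioc]; omega)
        (by rw [Nat.card_Icc]; omega) M (t - 1)
  have h_nat : #bad * (n - 1).choose (s - 1) ≤ (M + 1) * A * n.choose (M + 1) :=
    calc #bad * (n - 1).choose (s - 1)
        ≤ (∑ j ∈ Icc 1 n, #(badAt j)) * (n - 1).choose (s - 1) :=
          Nat.mul_le_mul_right _ ((card_le_card h_union).trans card_biUnion_le)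
      _ ≤ ∑ j ∈ Icc 1 n, (n - 1).choose M * A := by rw [sum_mul]; exact sum_le_sum h_at
      _ = (M + 1) * A * n.choose (M + 1) := by
          obtain ⟨N, rfl⟩ : ∃ N, n = N + 1 := ⟨n - 1, by omega⟩
          simp only [sum_const, Nat.card_Icc, smul_eq_mul, Nat.add_sub_cancel]
          rw [← mul_assoc, Nat.add_one_mul_choose_eq]
          ring
  have hC : (0 : ℝ) < n.choose (M + 1) := by exact_mod_cast Nat.choose_pos hmn
  have hC' : (0 : ℝ) < (n - 1).choose (s - 1) := by exact_mod_cast Nat.choose_pos (by omega)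
  rw [← sum_div, ← mul_div_assoc, div_le_div_iff₀ hC hC']
  exact_mod_cast h_nat
end
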